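/- arXiv:1410.7104 — 2 statements merged into one kernel-verified Lean document; each statement's English description precedes it below -/
import Mathlib

section
/- Let u : ℝ⁴ → ℝ be a C³ function of (x,y,z,t) satisfying the first heavenly equation u_{xt} u_{yz} - u_{xz} u_{yt} = 1. Then for any smooth function A(x,y), the function φ = A_x u_y - A_y u_x satisfies the linearization of the equation: u_{xt} φ_{yz} + u_{yz} φ_{xt} - u_{xz} φ_{yt} - u_{yt} φ_{xz} = 0 (so the corresponding flow is an infinitesimal symmetry). -/
/-- Partial derivative on `ℝ⁴` with coordinates `(x,y,z,t) = (0,1,2,3)`. -/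
noncomputable def pd (i : Fin 4) (f : (Fin 4 → ℝ) → ℝ) (p : Fin 4 → ℝ) : ℝ :=
  fderiv ℝ f p (Pi.single i 1)

/-- Second partial derivative `f_{ij}`. -/
noncomputable def pdd (i j : Fin 4) (f : (Fin 4 → ℝ) → ℝ) : (Fin 4 → ℝ) → ℝ :=
  pd i (pd j f)

lemma pd_contDiff {n m : WithTop ℕ∞} (i : Fin 4) {f : (Fin 4 → ℝ) → ℝ}
    (hf : ContDiff ℝ n f) (h : m + 1 ≤ n) : ContDiff ℝ m (pd i f) :=
  (hf.fderiv_right h).clm_apply contDiff_const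

lemma pd_mul {f g : (Fin 4 → ℝ) → ℝ} {p} (i : Fin 4)
    (hf : DifferentiableAt ℝ f p) (hg : DifferentiableAt ℝ g p) :
    pd i (fun s => f s * g s) p = pd i f p * g p + f p * pd i g p := by
  unfold pd
  rw [fderiv_fun_mul hf hg]
  simp [ContinuousLinearMap.add_apply, smul_eq_mul]
  ring

lemma pd_sub {f g : (Fin 4 → ℝ) → ℝ} {p} (i : Fin 4)
    (hf : DifferentiableAt ℝ f p) (hg : DifferentiableAt ℝ g p) :
    pd i (fun s => f s - g s) p = pd i f p - pd i g p := by
  unfold pd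
  rw [fderiv_fun_sub hf hg]
  simp

lemma pd_const (i : Fin 4) (c : ℝ) (p) : pd i (fun _ => c) p = 0 := by
  unfold pd; simp

lemma pdd_eq {f : (Fin 4 → ℝ) → ℝ} (hf : ContDiff ℝ 2 f) (i j : Fin 4) (p) :
    pdd i j f p = fderiv ℝ (fderiv ℝ f) p (Pi.single i 1) (Pi.single j 1) := by
  have hd : DifferentiableAt ℝ (fderiv ℝ f) p :=
    ((hf.fderiv_right (m := 1) (by norm_num)).differentiable (by norm_num)).differentiableAt
  have h := ((ContinuousLinearMap.apply ℝ ℝ (Pi.single j 1 : Fin 4 → ℝ)).hasFDerivAt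
      (x := fderiv ℝ f p)).comp p hd.hasFDerivAt
  unfold pdd pd
  rw [show (fun q => fderiv ℝ f q (Pi.single j 1)) =
      (ContinuousLinearMap.apply ℝ ℝ (Pi.single j 1 : Fin 4 → ℝ)) ∘ (fderiv ℝ f) from rfl,
    h.fderiv]
  rfl

lemma pd_comm {f : (Fin 4 → ℝ) → ℝ} (hf : ContDiff ℝ 2 f) (i j : Fin 4) (p) :
    pdd i j f p = pdd j i f p := by
  rw [pdd_eq hf i j, pdd_eq hf j i]
  exact second_derivative_symmetric
    (fun y => (hf.differentiable (by norm_num) y).hasFDerivAt)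
    (((hf.fderiv_right (m := 1) (by norm_num)).differentiable (by norm_num) p).hasFDerivAt) _ _

lemma phi_expand (u A : (Fin 4 → ℝ) → ℝ) (hu : ContDiff ℝ 3 u) (hA : ContDiff ℝ (⊤ : ℕ∞) A)
    (i j : Fin 4) (hAj : ∀ q, pd j A q = 0) (p : Fin 4 → ℝ) :
    pdd i j (fun s => pd 0 A s * pd 1 u s - pd 1 A s * pd 0 u s) p
      = pdd i 0 A p * pdd j 1 u p + pd 0 A p * pd i (pdd j 1 u) p
      - pdd i 1 A p * pdd j 0 u p - pd 1 A p * pd i (pdd j 0 u) p := by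
  have hA2 : ContDiff ℝ 2 A := hA.of_le (WithTop.coe_le_coe.mpr le_top)
  have hpdu : ∀ k, ContDiff ℝ 2 (pd k u) := fun k => pd_contDiff k hu (by norm_num)
  have hpdA : ∀ k, ContDiff ℝ 2 (pd k A) := fun k => pd_contDiff k hA (WithTop.coe_le_coe.mpr le_top)
  have dAu : ∀ k q, DifferentiableAt ℝ (pd k u) q :=
    fun k q => ((hpdu k).differentiable (by norm_num)).differentiableAt
  have dAA : ∀ k q, DifferentiableAt ℝ (pd k A) q :=
    fun k q => ((hpdA k).differentiable (by norm_num)).differentiableAt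
  have dduu : ∀ k l q, DifferentiableAt ℝ (pdd k l u) q :=
    fun k l q => ((pd_contDiff (m := 1) k (hpdu l) (by norm_num)).differentiable (by norm_num)).differentiableAt
  -- the inner derivative, as a function
  have step : pd j (fun s => pd 0 A s * pd 1 u s - pd 1 A s * pd 0 u s)
      = fun q => pd 0 A q * pdd j 1 u q - pd 1 A q * pdd j 0 u q := by
    funext q
    have hz0 : pdd j 0 A q = 0 := by
      rw [pd_comm hA2 j 0 q]
      show pd 0 (pd j A) q = 0
      rw [show pd j A = fun _ => (0:ℝ) from funext hAj, pd_const]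
    have hz1 : pdd j 1 A q = 0 := by
      rw [pd_comm hA2 j 1 q]
      show pd 1 (pd j A) q = 0
      rw [show pd j A = fun _ => (0:ℝ) from funext hAj, pd_const]
    rw [pd_sub j ((dAA 0 q).fun_mul (dAu 1 q)) ((dAA 1 q).fun_mul (dAu 0 q)),
      pd_mul j (dAA 0 q) (dAu 1 q), pd_mul j (dAA 1 q) (dAu 0 q)]
    have e0 : pd j (pd 0 A) q = pdd j 0 A q := rfl
    have e1 : pd j (pd 1 A) q = pdd j 1 A q := rfl
    rw [e0, e1, hz0, hz1]
    have f1 : pd j (pd 1 u) q = pdd j 1 u q := rfl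
    have f0 : pd j (pd 0 u) q = pdd j 0 u q := rfl
    rw [f1, f0]; ring
  show pd i (pd j fun s => pd 0 A s * pd 1 u s - pd 1 A s * pd 0 u s) p = _
  rw [step, pd_sub i ((dAA 0 p).fun_mul (dduu j 1 p)) ((dAA 1 p).fun_mul (dduu j 0 p)),
    pd_mul i (dAA 0 p) (dduu j 1 p), pd_mul i (dAA 1 p) (dduu j 0 p)]
  have g0 : pd i (pd 0 A) p = pdd i 0 A p := rfl
  have g1 : pd i (pd 1 A) p = pdd i 1 A p := rfl
  rw [g0, g1]; ring

/-- If `u` is a `C³` solution of the first heavenly equation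
`u_{xt} u_{yz} - u_{xz} u_{yt} = 1` and `A = A(x,y)` is smooth, then
`φ = A_x u_y - A_y u_x` satisfies the linearized equation
`u_{xt} φ_{yz} + u_{yz} φ_{xt} - u_{xz} φ_{yt} - u_{yt} φ_{xz} = 0`. -/
theorem first_heavenly_symmetry (u A : (Fin 4 → ℝ) → ℝ)
    (hu : ContDiff ℝ 3 u) (hA : ContDiff ℝ (⊤ : ℕ∞) A)
    (hAz : ∀ p, pd 2 A p = 0) (hAt : ∀ p, pd 3 A p = 0)
    (heq : ∀ p, pdd 0 3 u p * pdd 1 2 u p - pdd 0 2 u p * pdd 1 3 u p = 1) :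
    ∀ p, pdd 0 3 u p * pdd 1 2 (fun s => pd 0 A s * pd 1 u s - pd 1 A s * pd 0 u s) p
       + pdd 1 2 u p * pdd 0 3 (fun s => pd 0 A s * pd 1 u s - pd 1 A s * pd 0 u s) p
       - pdd 0 2 u p * pdd 1 3 (fun s => pd 0 A s * pd 1 u s - pd 1 A s * pd 0 u s) p
       - pdd 1 3 u p * pdd 0 2 (fun s => pd 0 A s * pd 1 u s - pd 1 A s * pd 0 u s) p = 0 := by
  intro p
  have hu2 : ContDiff ℝ 2 u := hu.of_le (by norm_num)
  have hA2 : ContDiff ℝ 2 A := hA.of_le (WithTop.coe_le_coe.mpr le_top)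
  have hpdu : ∀ k, ContDiff ℝ 2 (pd k u) := fun k => pd_contDiff k hu (by norm_num)
  have dduu : ∀ k l q, DifferentiableAt ℝ (pdd k l u) q :=
    fun k l q => ((pd_contDiff (m := 1) k (hpdu l) (by norm_num)).differentiable (by norm_num)).differentiableAt
  -- expansions of the four second derivatives of φ
  have e12 := phi_expand u A hu hA 1 2 hAz p
  have e03 := phi_expand u A hu hA 0 3 hAt p
  have e13 := phi_expand u A hu hA 1 3 hAt p
  have e02 := phi_expand u A hu hA 0 2 hAz p
  rw [e12, e03, e13, e02]
  -- symmetry of second derivatives of u, at the level of functions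
  have s21 : pdd 2 1 u = pdd 1 2 u := funext fun q => pd_comm hu2 2 1 q
  have s31 : pdd 3 1 u = pdd 1 3 u := funext fun q => pd_comm hu2 3 1 q
  have s20 : pdd 2 0 u = pdd 0 2 u := funext fun q => pd_comm hu2 2 0 q
  have s30 : pdd 3 0 u = pdd 0 3 u := funext fun q => pd_comm hu2 3 0 q
  rw [s21, s31, s20, s30]
  -- mixed third derivative symmetries
  have m1 : pd 0 (pdd 1 3 u) p = pd 1 (pdd 0 3 u) p := pd_comm (hpdu 3) 0 1 p
  have m2 : pd 0 (pdd 1 2 u) p = pd 1 (pdd 0 2 u) p := pd_comm (hpdu 2) 0 1 p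
  rw [m1, m2]
  -- symmetry of A
  have sA : pdd 1 0 A p = pdd 0 1 A p := pd_comm hA2 1 0 p
  rw [sA]
  -- differentiated heavenly equation
  have key : ∀ k : Fin 4,
      pd k (pdd 0 3 u) p * pdd 1 2 u p + pdd 0 3 u p * pd k (pdd 1 2 u) p
      - (pd k (pdd 0 2 u) p * pdd 1 3 u p + pdd 0 2 u p * pd k (pdd 1 3 u) p) = 0 := by
    intro k
    rw [← pd_mul k (dduu 0 3 p) (dduu 1 2 p), ← pd_mul k (dduu 0 2 p) (dduu 1 3 p),
      ← pd_sub k ((dduu 0 3 p).fun_mul (dduu 1 2 p)) ((dduu 0 2 p).fun_mul (dduu 1 3 p)),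
      show (fun s => pdd 0 3 u s * pdd 1 2 u s - pdd 0 2 u s * pdd 1 3 u s) = fun _ => (1:ℝ)
        from funext heq, pd_const]
  have H1 := key 1
  have H0 := key 0
  rw [m1, m2] at H0
  linear_combination pd 0 A p * H1 - pd 1 A p * H0
end

section
/- Suppose u, v, w are C³ functions of (x,y,z,t) and q is a C² function satisfying the nonlinear covering system q_t = (v_x - q) q_x - w_x q_y + u_x and q_z = -v_y q_x + (w_y + q) q_y - u_y. If moreover the compatibility q_{tz} = q_{zt} holds identically in the second jet of q (i.e. after substituting the two covering equations and their consequences), then u, v, w satisfy the three-component system: u_{xz} + u_{ty} + v_y u_{xx} - (v_x + w_y) u_{xy} + w_x u_{yy} = 0, v_{xz} + v_{ty} + v_y v_{xx} - (v_x + w_y) v_{xy} + w_x v_{yy} + u_y = 0, w_{xz} + w_{ty} + v_y w_{xx} - (v_x + w_y) w_{xy} + w_x w_{yy} + u_x = 0; conversely if u, v, w satisfy the three-component system then the covering system is compatible for generic q. -/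
/-- Formal expression for `q_{tz}` obtained by differentiating the first covering
equation `q_t = (v_x - q) q_x - w_x q_y + u_x` with respect to `z` and substituting the
covering equations; `(q, qx, qy, qxx, qxy, qyy)` are free second-jet variables of `q`. -/
noncomputable def Etz (u v w : (Fin 4 → ℝ) → ℝ) (p : Fin 4 → ℝ)
    (q qx qy qxx qxy qyy : ℝ) : ℝ :=
  (pdd 0 2 v p - (-(pd 1 v p) * qx + (pd 1 w p + q) * qy - pd 1 u p)) * qx
  + (pd 0 v p - q) *
      (-(pdd 0 1 v p) * qx - pd 1 v p * qxx + (pdd 0 1 w p + qx) * qy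
        + (pd 1 w p + q) * qxy - pdd 0 1 u p)
  - pdd 0 2 w p * qy
  - pd 0 w p *
      (-(pdd 1 1 v p) * qx - pd 1 v p * qxy + (pdd 1 1 w p + qy) * qy
        + (pd 1 w p + q) * qyy - pdd 1 1 u p)
  + pdd 0 2 u p

/-- Formal expression for `q_{zt}` obtained by differentiating the second covering
equation `q_z = -v_y q_x + (w_y + q) q_y - u_y` with respect to `t` and substituting
the covering equations. -/
noncomputable def Ezt (u v w : (Fin 4 → ℝ) → ℝ) (p : Fin 4 → ℝ)
    (q qx qy qxx qxy qyy : ℝ) : ℝ :=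
  -(pdd 1 3 v p) * qx
  - pd 1 v p *
      ((pdd 0 0 v p - qx) * qx + (pd 0 v p - q) * qxx - pdd 0 0 w p * qy
        - pd 0 w p * qxy + pdd 0 0 u p)
  + (pdd 1 3 w p + ((pd 0 v p - q) * qx - pd 0 w p * qy + pd 0 u p)) * qy
  + (pd 1 w p + q) *
      ((pdd 0 1 v p - qy) * qx + (pd 0 v p - q) * qxy - pdd 0 1 w p * qy
        - pd 0 w p * qyy + pdd 0 1 u p)
  - pdd 1 3 u p

/-!
Differentiating the two covering equations and substituting them back, the terms in `q`,
`q_xx`, `q_xy`, `q_yy` and `q_x q_y`, `q_x²`, `q_y²` cancel identically, so the compatibility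
defect `q_tz - q_zt` is affine in `(q_x, q_y)`; its three coefficients are exactly the three
equations of the system (once the mixed partials `f_ty = f_yt` of `u, v, w` are identified).
-/

lemma pdd_eq_fderiv_fderiv {f : (Fin 4 → ℝ) → ℝ} {p : Fin 4 → ℝ}
    (hf : DifferentiableAt ℝ (fderiv ℝ f) p) (i j : Fin 4) :
    pdd i j f p = fderiv ℝ (fderiv ℝ f) p (Pi.single i 1) (Pi.single j 1) := by
  have h := fderiv_clm_apply hf (differentiableAt_const (Pi.single j (1 : ℝ)))
  change fderiv ℝ (fun x => fderiv ℝ f x (Pi.single j 1)) p (Pi.single i 1) = _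
  simp [h]

lemma pdd_comm {f : (Fin 4 → ℝ) → ℝ} {p : Fin 4 → ℝ} (hf : ContDiffAt ℝ 2 f p) (i j : Fin 4) :
    pdd i j f p = pdd j i f p := by
  have hf' : DifferentiableAt ℝ (fderiv ℝ f) p :=
    (hf.fderiv_right (m := 1) le_rfl).differentiableAt one_ne_zero
  rw [pdd_eq_fderiv_fderiv hf', pdd_eq_fderiv_fderiv hf']
  exact hf.isSymmSndFDerivAt (by simp) _ _

lemma Etz_sub_Ezt {u v w : (Fin 4 → ℝ) → ℝ} {p : Fin 4 → ℝ}
    (hu : ContDiffAt ℝ 2 u p) (hv : ContDiffAt ℝ 2 v p) (hw : ContDiffAt ℝ 2 w p)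
    (q qx qy qxx qxy qyy : ℝ) :
    Etz u v w p q qx qy qxx qxy qyy - Ezt u v w p q qx qy qxx qxy qyy =
      (pdd 0 2 u p + pdd 3 1 u p + pd 1 v p * pdd 0 0 u p
          - (pd 0 v p + pd 1 w p) * pdd 0 1 u p + pd 0 w p * pdd 1 1 u p)
      + qx * (pdd 0 2 v p + pdd 3 1 v p + pd 1 v p * pdd 0 0 v p
          - (pd 0 v p + pd 1 w p) * pdd 0 1 v p + pd 0 w p * pdd 1 1 v p + pd 1 u p)
      - qy * (pdd 0 2 w p + pdd 3 1 w p + pd 1 v p * pdd 0 0 w p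
          - (pd 0 v p + pd 1 w p) * pdd 0 1 w p + pd 0 w p * pdd 1 1 w p + pd 0 u p) := by
  rw [pdd_comm hu 3 1, pdd_comm hv 3 1, pdd_comm hw 3 1, Etz, Ezt]
  ring

lemma forall_add_mul_sub_mul_eq_zero_iff {R : Type*} [CommRing R] {a b c : R} :
    (∀ x y : R, a + x * b - y * c = 0) ↔ a = 0 ∧ b = 0 ∧ c = 0 := by
  refine ⟨fun h => ?_, fun ⟨ha, hb, hc⟩ x y => by simp [ha, hb, hc]⟩
  have h₀ := h 0 0
  have h₁ := h 1 0
  have h₂ := h 0 1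
  simp only [zero_mul, one_mul, add_zero, sub_zero] at h₀ h₁ h₂
  exact ⟨h₀, by simpa [h₀] using h₁, by simpa [h₀] using h₂⟩

/-- The covering system `q_t = (v_x - q)q_x - w_x q_y + u_x`,
`q_z = -v_y q_x + (w_y + q)q_y - u_y` is compatible identically in the second jet of `q`
(i.e. `q_{tz} = q_{zt}` as polynomials in the free jet variables) if and only if
`(u,v,w)` satisfy the three-component generalization of the second heavenly equation. -/
theorem three_component_second_heavenly (u v w : (Fin 4 → ℝ) → ℝ)
    (hu : ContDiff ℝ 3 u) (hv : ContDiff ℝ 3 v) (hw : ContDiff ℝ 3 w) :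
    (∀ p : Fin 4 → ℝ, ∀ q qx qy qxx qxy qyy : ℝ,
        Etz u v w p q qx qy qxx qxy qyy = Ezt u v w p q qx qy qxx qxy qyy)
    ↔ (∀ p : Fin 4 → ℝ,
        pdd 0 2 u p + pdd 3 1 u p + pd 1 v p * pdd 0 0 u p
          - (pd 0 v p + pd 1 w p) * pdd 0 1 u p + pd 0 w p * pdd 1 1 u p = 0 ∧
        pdd 0 2 v p + pdd 3 1 v p + pd 1 v p * pdd 0 0 v p
          - (pd 0 v p + pd 1 w p) * pdd 0 1 v p + pd 0 w p * pdd 1 1 v p + pd 1 u p = 0 ∧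
        pdd 0 2 w p + pdd 3 1 w p + pd 1 v p * pdd 0 0 w p
          - (pd 0 v p + pd 1 w p) * pdd 0 1 w p + pd 0 w p * pdd 1 1 w p + pd 0 u p = 0) := by
  refine forall_congr' fun p => ?_
  have h2 : (2 : WithTop ℕ∞) ≤ 3 := by norm_num
  simp only [← sub_eq_zero (a := Etz u v w p _ _ _ _ _ _),
    Etz_sub_Ezt (hu.of_le h2).contDiffAt (hv.of_le h2).contDiffAt (hw.of_le h2).contDiffAt,
    forall_const]
  exact forall_add_mul_sub_mul_eq_zero_iff
end
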